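/- Let n and k be natural numbers with 3k < n + 1. Then the sum of the first k+1 binomial coefficients is bounded above by twice the last one: \sum_{i=0}^{k} \binom{n}{i} \le 2\binom{n}{k}. -/
import Mathlib

lemma two_choose_le (n k : ℕ) (h : 3 * k + 2 ≤ n) :
    2 * n.choose k ≤ n.choose (k + 1) := by
  have key : n.choose (k + 1) * (k + 1) = n.choose k * (n - k) :=
    Nat.choose_succ_right_eq n k
  have h2 : 2 * (k + 1) ≤ n - k := by omega
  have : 2 * n.choose k * (k + 1) ≤ n.choose (k + 1) * (k + 1) := by
    calc 2 * n.choose k * (k + 1) = n.choose k * (2 * (k + 1)) := by ring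
    _ ≤ n.choose k * (n - k) := Nat.mul_le_mul_left _ h2
    _ = n.choose (k + 1) * (k + 1) := key.symm
  exact Nat.le_of_mul_le_mul_right this (Nat.succ_pos k)

theorem sum_choose_le_two_mul_choose (n k : ℕ) (h : 3 * k < n + 1) :
    ∑ i ∈ Finset.range (k + 1), n.choose i ≤ 2 * n.choose k := by
  induction k with
  | zero => simp
  | succ k ih =>
    rw [Finset.sum_range_succ]
    have h1 : 3 * k < n + 1 := by omega
    have h2 : 2 * n.choose k ≤ n.choose (k + 1) := two_choose_le n k (by omega)
    have := ih h1
    omega
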